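/- Let (Ω, 𝒜, μ) be a finite measure space, P a finite poset, and {A_p}_{p∈P} a family of measurable sets. Let 𝔛 be a class of subsets of P such that ⋂_{p∈B} A_p ⊆ ⋃_{p∈B'} A_p for each B ∈ 𝔛, where B' = {p ∈ P : p > b for every b ∈ B} is the set of strict upper bounds of B not in B. Let 𝔍 = {I ⊆ P : B ⊆ I for some B ∈ 𝔛}. Then μ(⋂_{p∈P} Ω∖A_p) = Σ_{I ∈ 2^P ∖ 𝔍} (−1)^{|I|} μ(⋂_{i∈I} A_i). -/

import Mathlib

/-!
Fix `ω` and let `S` be the set of `p` with `ω ∈ A p`. Both sides of the identity are integrals of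
indicator functions, and at `ω` the right-hand integrand is the signed count of the subsets of `S`
containing no member of `𝔛`. The hypothesis on `𝔛` says that every member of `𝔛` inside `S` has a
strict upper bound in `S`, so no such member contains a maximal element `m` of `S`. Hence adding or
removing `m` is a parity-reversing involution on those subsets, and the count is `1` if `S = ∅`
and `0` otherwise, which is the left-hand integrand at `ω`.
-/

open MeasureTheory Finset

theorem Finset.sum_powerset_filter_neg_one_pow_card_eq_zero {α R : Type*} [DecidableEq α]
    [Ring R] {S : Finset α} {m : α} (hm : m ∈ S) (Q : Finset α → Prop) [DecidablePred Q]
    (hQ : ∀ J ⊆ S.erase m, Q (insert m J) ↔ Q J) :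
    ∑ I ∈ S.powerset with Q I, (-1 : R) ^ I.card = 0 := by
  rw [sum_filter, ← insert_erase hm, sum_powerset_insert (notMem_erase m S), ← sum_add_distrib]
  refine sum_eq_zero fun J hJ => ?_
  have hmJ : m ∉ J := fun h => notMem_erase m S (mem_powerset.1 hJ h)
  simp only [hQ J (mem_powerset.1 hJ), card_insert_of_notMem hmJ, pow_succ]
  split_ifs <;> simp

theorem Finset.sum_powerset_filter_not_exists_subset_neg_one_pow_card {P R : Type*}
    [PartialOrder P] [DecidableEq P] [Ring R] {𝔛 : Finset (Finset P)} {S : Finset P}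
    (hS : ∀ B ∈ 𝔛, B ⊆ S → ∃ q ∈ S, ∀ b ∈ B, b < q) :
    ∑ I ∈ S.powerset with ¬∃ B ∈ 𝔛, B ⊆ I, (-1 : R) ^ I.card = if S = ∅ then 1 else 0 := by
  rcases S.eq_empty_or_nonempty with rfl | hne
  · have h𝔛 : ¬∃ B ∈ 𝔛, B ⊆ ∅ := fun ⟨B, hB, hB0⟩ => by
      obtain ⟨q, hq, -⟩ := hS B hB hB0
      exact notMem_empty q hq
    rw [powerset_empty, filter_singleton, if_pos h𝔛, sum_singleton, if_pos rfl, card_empty,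
      pow_zero]
  obtain ⟨m, hmS, hmax⟩ := S.exists_maximal hne
  rw [if_neg hne.ne_empty]
  refine sum_powerset_filter_neg_one_pow_card_eq_zero hmS _ fun J hJ => not_congr ?_
  refine ⟨fun ⟨B, hB, hBJ⟩ => ⟨B, hB, fun b hb => ?_⟩, fun ⟨B, hB, hBJ⟩ =>
    ⟨B, hB, hBJ.trans (subset_insert m J)⟩⟩
  have hJS : insert m J ⊆ S := insert_subset hmS (hJ.trans (erase_subset m S))
  obtain ⟨q, hqS, hq⟩ := hS B hB (hBJ.trans hJS)
  have hmB : m ∉ B := fun hmB => (hq m hmB).not_ge (hmax hqS (hq m hmB).le)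
  exact (mem_insert.1 (hBJ hb)).resolve_left (ne_of_mem_of_not_mem hb hmB)

theorem MeasureTheory.measureReal_eq_sum_of_indicator_eq {Ω ι : Type*} [MeasurableSpace Ω]
    (μ : Measure Ω) [IsFiniteMeasure μ] {E : Set Ω} (hE : MeasurableSet E) {s : Finset ι}
    {F : ι → Set Ω} (hF : ∀ i ∈ s, MeasurableSet (F i)) (c : ι → ℝ)
    (h : ∀ ω, E.indicator 1 ω = ∑ i ∈ s, c i * (F i).indicator 1 ω) :
    μ.real E = ∑ i ∈ s, c i * μ.real (F i) := by
  have hint : ∀ i ∈ s, Integrable (fun ω => c i * (F i).indicator (1 : Ω → ℝ) ω) μ :=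
    fun i hi => ((integrable_indicator_iff (hF i hi)).2 integrableOn_const).const_mul _
  calc μ.real E = ∫ ω, E.indicator 1 ω ∂μ := (integral_indicator_one hE).symm
    _ = ∫ ω, ∑ i ∈ s, c i * (F i).indicator 1 ω ∂μ := by simp_rw [h]
    _ = ∑ i ∈ s, c i * μ.real (F i) := by
      rw [integral_finsetSum s hint]
      refine sum_congr rfl fun i hi => ?_
      rw [integral_const_mul, integral_indicator_one (hF i hi)]

theorem indicator_iInter_compl_eq_sum {Ω P : Type*} [Fintype P] [DecidableEq P] [PartialOrder P]
    (A : P → Set Ω) (𝔛 : Finset (Finset P))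
    (h𝔛 : ∀ B ∈ 𝔛, (⋂ p ∈ B, A p) ⊆ ⋃ p ∈ {q : P | ∀ b ∈ B, b < q}, A p) (ω : Ω) :
    (⋂ p, (A p)ᶜ).indicator 1 ω = ∑ I ∈ univ.powerset with ¬∃ B ∈ 𝔛, B ⊆ I,
      (-1 : ℝ) ^ I.card * (⋂ p ∈ I, A p).indicator 1 ω := by
  classical
  set S : Finset P := {p | ω ∈ A p}
  have hS : ∀ B ∈ 𝔛, B ⊆ S → ∃ q ∈ S, ∀ b ∈ B, b < q := fun B hB hBS => by
    have hω : ω ∈ ⋂ p ∈ B, A p := Set.mem_iInter₂.2 fun p hp => (mem_filter.1 (hBS hp)).2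
    obtain ⟨q, hq, hωq⟩ := Set.mem_iUnion₂.1 (h𝔛 B hB hω)
    exact ⟨q, mem_filter.2 ⟨mem_univ q, hωq⟩, hq⟩
  have hind : ∀ I : Finset P, (⋂ p ∈ I, A p).indicator (1 : Ω → ℝ) ω = if I ⊆ S then 1 else 0 :=
    fun I => by simp [Set.indicator_apply, subset_iff, S]
  have hind_compl : (⋂ p, (A p)ᶜ).indicator (1 : Ω → ℝ) ω = if S = ∅ then 1 else 0 := by
    simp [Set.indicator_apply, eq_empty_iff_forall_notMem, S]
  rw [hind_compl, ← sum_powerset_filter_not_exists_subset_neg_one_pow_card hS]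
  simp_rw [hind, mul_ite, mul_one, mul_zero, ← sum_filter, filter_filter]
  refine sum_congr (ext fun I => ?_) fun _ _ => rfl
  simp [and_comm]

/-- Dohmen's ordering-based theorem, Theorem 1 of the paper.
For a poset `P` and a class `𝔛` of subsets `B` with `⋂_{p∈B} A_p ⊆ ⋃_{p∈B'} A_p`,
where `B' = {p : p > b for all b ∈ B}`, the inclusion-exclusion sum can be
restricted to the sets containing no member of `𝔛`. -/
theorem stmt_7 {Ω : Type*} [MeasurableSpace Ω] (μ : Measure Ω) [IsFiniteMeasure μ]
    {P : Type*} [Fintype P] [DecidableEq P] [PartialOrder P]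
    (A : P → Set Ω) (hA : ∀ p, MeasurableSet (A p))
    (𝔛 : Finset (Finset P))
    (h𝔛 : ∀ B ∈ 𝔛, (⋂ p ∈ B, A p) ⊆ ⋃ p ∈ {q : P | ∀ b ∈ B, b < q}, A p) :
    (μ (⋂ p : P, (A p)ᶜ)).toReal =
      ∑ I ∈ (Finset.univ : Finset P).powerset.filter
          (fun I => ¬ ∃ B ∈ 𝔛, B ⊆ I),
        (-1 : ℝ) ^ I.card * (μ (⋂ p ∈ I, A p)).toReal :=
  measureReal_eq_sum_of_indicator_eq μ (.iInter fun p => (hA p).compl)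
    (fun I _ => .biInter I.countable_toSet fun p _ => hA p) _
    (indicator_iInter_compl_eq_sum A 𝔛 h𝔛)
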